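/- arXiv:2108.13318 — 4 statements merged into one kernel-verified Lean document; each statement's English description precedes it below -/
import Mathlib

section
/- Fix n ≥ 1 and let φ₁ : (-∞,0) → ℝ be the inverse of F₋(x) = -∫_x^∞ (1+e^s)^{-1/(n+1)} ds. Then φ₁ is smooth and satisfies the ODE (φ₁'(t))^{n+1} = 1 + e^{φ₁(t)} for all t < 0, with φ₁'(t) > 0. -/
open Real MeasureTheory Set Filter

noncomputable def gAux (n : ℕ) : ℝ → ℝ := fun s => (1 + Real.exp s) ^ (-(1:ℝ) / ((n : ℝ) + 1))

lemma gAux_pos (n : ℕ) (s : ℝ) : 0 < gAux n s :=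
  Real.rpow_pos_of_pos (by positivity) _

lemma gAux_smooth (n : ℕ) : ContDiff ℝ (↑(⊤ : ℕ∞)) (gAux n) := by
  rw [contDiff_iff_contDiffAt]
  intro s
  exact (contDiff_const.add Real.contDiff_exp).contDiffAt.rpow_const_of_ne
    (by positivity)

lemma gAux_integrableOn (n : ℕ) (x : ℝ) : IntegrableOn (gAux n) (Ioi x) := by
  have hb : (0:ℝ) < 1 / ((n:ℝ) + 1) := by positivity
  refine Integrable.mono' (exp_neg_integrableOn_Ioi x hb)
    ((gAux_smooth n).continuous.aestronglyMeasurable.restrict) ?_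
  refine Filter.Eventually.of_forall fun s => ?_
  rw [Real.norm_of_nonneg (gAux_pos n s).le]
  have h1 : Real.exp s ≤ 1 + Real.exp s := by linarith
  have hz : -(1:ℝ) / ((n:ℝ)+1) ≤ 0 := by
    apply div_nonpos_of_nonpos_of_nonneg <;> [norm_num; positivity]
  have h2 := Real.rpow_le_rpow_of_nonpos (Real.exp_pos s) h1 hz
  calc gAux n s ≤ Real.exp s ^ (-(1:ℝ) / ((n:ℝ)+1)) := h2
    _ = Real.exp (-(1 / ((n:ℝ)+1)) * s) := by
        rw [← Real.exp_mul]; ring_nf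

lemma gAux_split (n : ℕ) {a b : ℝ} (hab : a ≤ b) :
    ∫ s in Ioi a, gAux n s = (∫ s in a..b, gAux n s) + ∫ s in Ioi b, gAux n s := by
  rw [← Ioc_union_Ioi_eq_Ioi hab, MeasureTheory.setIntegral_union (Ioc_disjoint_Ioi le_rfl)
    measurableSet_Ioi ((gAux_integrableOn n a).mono_set Ioc_subset_Ioi_self)
    (gAux_integrableOn n b), intervalIntegral.integral_of_le hab]

lemma FAux_eq (n : ℕ) (x : ℝ) :
    (- ∫ s in Ioi x, gAux n s) =
      (∫ s in (0:ℝ)..x, gAux n s) - ∫ s in Ioi (0:ℝ), gAux n s := by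
  rcases le_total x 0 with h | h
  · have := gAux_split n h
    rw [intervalIntegral.integral_symm] at this
    linarith
  · have := gAux_split n h
    linarith

lemma FAux_hasStrictDerivAt (n : ℕ) (x : ℝ) :
    HasStrictDerivAt (fun u => - ∫ s in Ioi u, gAux n s) (gAux n x) x := by
  have hfun : (fun u => - ∫ s in Ioi u, gAux n s) =
      fun u => (∫ s in (0:ℝ)..u, gAux n s) - ∫ s in Ioi (0:ℝ), gAux n s :=
    funext (FAux_eq n)
  rw [hfun]
  have key : HasStrictDerivAt (fun u => ∫ s in (0:ℝ)..u, gAux n s) (gAux n x) x :=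
    intervalIntegral.integral_hasStrictDerivAt_right
      ((gAux_smooth n).continuous.intervalIntegrable _ _)
      ((gAux_smooth n).continuous.stronglyMeasurableAtFilter _ _)
      (gAux_smooth n).continuous.continuousAt
  exact key.sub_const _

lemma FAux_smooth (n : ℕ) :
    ContDiff ℝ (↑(⊤ : ℕ∞)) (fun u => - ∫ s in Ioi u, gAux n s) := by
  rw [contDiff_infty_iff_deriv]
  constructor
  · exact fun u => ((FAux_hasStrictDerivAt n u).hasDerivAt).differentiableAt
  · have : deriv (fun u => - ∫ s in Ioi u, gAux n s) = gAux n :=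
      funext fun u => ((FAux_hasStrictDerivAt n u).hasDerivAt).deriv
    rw [this]
    exact gAux_smooth n

/-- Let `φ₁ : (-∞,0) → ℝ` be the inverse of `F₋(x) = -∫_x^∞ (1+eˢ)^{-1/(n+1)} ds`.
Then `φ₁` is smooth on `(-∞,0)` and satisfies `(φ₁')^{n+1} = 1 + e^{φ₁}` with `φ₁' > 0`. -/
theorem stmt2 (n : ℕ) (hn : 1 ≤ n) (φ : ℝ → ℝ)
    (hinv : ∀ t ∈ Set.Iio (0:ℝ),
      (- ∫ s in Set.Ioi (φ t), (1 + Real.exp s) ^ (-(1:ℝ) / ((n : ℝ) + 1))) = t)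
    (hinv' : ∀ x : ℝ,
      φ (- ∫ s in Set.Ioi x, (1 + Real.exp s) ^ (-(1:ℝ) / ((n : ℝ) + 1))) = x) :
    ContDiffOn ℝ (⊤ : ℕ∞) φ (Set.Iio 0) ∧
    ∀ t ∈ Set.Iio (0:ℝ),
      (deriv φ t) ^ (n + 1) = 1 + Real.exp (φ t) ∧ 0 < deriv φ t := by
  set F : ℝ → ℝ := fun u => - ∫ s in Ioi u, gAux n s with hF
  have hinvF : ∀ t ∈ Set.Iio (0:ℝ), F (φ t) = t := hinv
  have hinvF' : ∀ x, φ (F x) = x := hinv'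
  have hF_inj : Function.Injective F :=
    Function.LeftInverse.injective hinvF'
  -- derivative of φ at each t < 0
  have key : ∀ t ∈ Set.Iio (0:ℝ),
      ContDiffAt ℝ (↑(⊤:ℕ∞)) φ t ∧ HasStrictDerivAt φ (gAux n (φ t))⁻¹ t := by
    intro t ht
    set x := φ t with hx
    have hFx : F x = t := hinvF t ht
    have hsd : HasStrictDerivAt F (gAux n x) x := FAux_hasStrictDerivAt n x
    have hne : gAux n x ≠ 0 := (gAux_pos n x).ne'
    have hder : HasStrictDerivAt φ (gAux n x)⁻¹ t := by
      have := hsd.to_local_left_inverse (g := φ) hne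
        (Filter.Eventually.of_forall fun u => hinvF' u)
      rwa [hFx] at this
    refine ⟨?_, hder⟩
    -- smoothness via inverse function theorem
    have hCD : ContDiffAt ℝ (↑(⊤:ℕ∞)) F x := (FAux_smooth n).contDiffAt
    have hf' : HasFDerivAt F
        ((ContinuousLinearEquiv.unitsEquivAut ℝ (Units.mk0 (gAux n x) hne) :
          ℝ ≃L[ℝ] ℝ) : ℝ →L[ℝ] ℝ) x :=
      hsd.hasDerivAt.hasFDerivAt_equiv hne
    have hone : (↑(⊤:ℕ∞) : WithTop ℕ∞) ≠ 0 := by exact_mod_cast (ENat.top_ne_zero : (⊤:ℕ∞) ≠ 0)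
    have hinvCD : ContDiffAt ℝ (↑(⊤:ℕ∞)) (hCD.localInverse hf' hone) t := by
      have := hCD.to_localInverse (f' := ContinuousLinearEquiv.unitsEquivAut ℝ
        (Units.mk0 (gAux n x) hne)) hf' hone
      rwa [hFx] at this
    have hev : φ =ᶠ[nhds t] hCD.localInverse hf' hone := by
      have hsf : HasStrictFDerivAt F
          ((ContinuousLinearEquiv.unitsEquivAut ℝ (Units.mk0 (gAux n x) hne) :
            ℝ ≃L[ℝ] ℝ) : ℝ →L[ℝ] ℝ) x := hCD.hasStrictFDerivAt' hf' hone
      have h1 : ∀ᶠ y in nhds (F x), F (hCD.localInverse hf' hone y) = y :=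
        hsf.eventually_right_inverse
      rw [hFx] at h1
      have h2 : ∀ᶠ y in nhds t, y ∈ Set.Iio (0:ℝ) :=
        Iio_mem_nhds ht
      filter_upwards [h1, h2] with y hy1 hy2
      exact hF_inj (by rw [hinvF y hy2, hy1])
    exact hinvCD.congr_of_eventuallyEq hev
  constructor
  · exact fun t ht => ((key t ht).1.contDiffWithinAt)
  · intro t ht
    obtain ⟨-, hder⟩ := key t ht
    have hderiv : deriv φ t = (gAux n (φ t))⁻¹ := hder.hasDerivAt.deriv
    have hpos : 0 < deriv φ t := by
      rw [hderiv]; exact inv_pos.mpr (gAux_pos n _)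
    refine ⟨?_, hpos⟩
    have h1 : (0:ℝ) < 1 + Real.exp (φ t) := by positivity
    have hq : deriv φ t = (1 + Real.exp (φ t)) ^ ((1:ℝ) / ((n:ℝ)+1)) := by
      rw [hderiv]
      simp only [gAux]
      rw [← Real.rpow_neg h1.le]
      congr 1
      ring
    rw [hq, ← Real.rpow_natCast _ (n+1), ← Real.rpow_mul h1.le]
    have : (1:ℝ) / ((n:ℝ)+1) * ((n+1 : ℕ) : ℝ) = 1 := by
      push_cast
      field_simp
    rw [this, Real.rpow_one]
end

section
/- Fix n ≥ 1 and let φ₁ : (-∞,0) → ℝ be the inverse of F₋(x) = -∫_x^∞ (1+e^s)^{-1/(n+1)} ds. Then as t → 0⁻, φ₁(t) = -(n+1) log(-t/(n+1)) + O((-t)^{n+1}); in particular φ₁(t) + (n+1) log(-t/(n+1)) → 0. -/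
open Real MeasureTheory Filter Asymptotics Set

lemma expint (b x : ℝ) (hb : 0 < b) :
    ∫ s in Set.Ioi x, Real.exp (-(b*s)) = Real.exp (-(b*x))/b := by
  have hd : ∀ s : ℝ, HasDerivAt (fun s => -Real.exp (-(b*s))/b) (Real.exp (-(b*s))) s := by
    intro s
    have h1 : HasDerivAt (fun s : ℝ => -(b*s)) (-b) s := by
      have h0 : HasDerivAt (fun s : ℝ => b*s) b s := by simpa using (hasDerivAt_id s).const_mul b
      exact h0.neg
    have h2 := (h1.exp.neg).div_const b
    refine h2.congr_deriv ?_
    rw [mul_neg, neg_neg, mul_div_assoc, div_self hb.ne', mul_one]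
  have ht : Tendsto (fun s => -Real.exp (-(b*s))/b) atTop (nhds 0) := by
    have h0 : Tendsto (fun s : ℝ => b * s) atTop atTop := tendsto_id.const_mul_atTop hb
    have h2 := Real.tendsto_exp_neg_atTop_nhds_zero.comp h0
    simpa using h2.neg.div_const b
  have hi : IntegrableOn (fun s => Real.exp (-(b*s))) (Set.Ioi x) := by
    simpa [neg_mul] using exp_neg_integrableOn_Ioi x hb
  have := integral_Ioi_of_hasDerivAt_of_tendsto
    (f := fun s => -Real.exp (-(b*s))/b) (f' := fun s => Real.exp (-(b*s))) (a := x)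
    (((continuous_exp.comp (continuous_const.mul continuous_id).neg).neg.div_const b).continuousWithinAt) (fun s _ => hd s) hi ht
  rw [this]; ring

lemma gub (c : ℝ) (hc : 2 ≤ c) (s : ℝ) :
    (1 + Real.exp s) ^ (-(1:ℝ)/c) ≤ Real.exp (-(1/c*s)) := by
  have h := Real.rpow_le_rpow_of_nonpos (Real.exp_pos s) (by linarith [Real.exp_pos s] : Real.exp s ≤ 1 + Real.exp s)
    (by rw [neg_div]; exact neg_nonpos.mpr (by positivity) : -(1:ℝ)/c ≤ 0)
  calc (1 + Real.exp s) ^ (-(1:ℝ)/c) ≤ (Real.exp s) ^ (-(1:ℝ)/c) := h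
    _ = Real.exp (-(1/c*s)) := by rw [← Real.exp_mul]; ring_nf

lemma glb (c : ℝ) (hc : 2 ≤ c) (s : ℝ) :
    Real.exp (-(1/c*s)) - Real.exp (-((1+1/c)*s)) ≤ (1 + Real.exp s) ^ (-(1:ℝ)/c) := by
  have hc0 : (0:ℝ) < c := by linarith
  set u := Real.exp (-s) with hu
  have hu0 : 0 < u := Real.exp_pos _
  have hsplit : 1 + Real.exp s = Real.exp s * (1 + u) := by
    rw [mul_add, mul_one, hu, ← Real.exp_add]; simp [add_comm]
  have hmul : (1 + Real.exp s) ^ (-(1:ℝ)/c)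
      = (Real.exp s) ^ (-(1:ℝ)/c) * (1 + u) ^ (-(1:ℝ)/c) := by
    rw [hsplit, Real.mul_rpow (Real.exp_pos s).le (by linarith)]
  have h1 : (1 + u) ^ (-1:ℝ) ≤ (1 + u) ^ (-(1:ℝ)/c) := by
    apply Real.rpow_le_rpow_of_exponent_le (by linarith)
    rw [neg_div]
    have : 1/c ≤ 1 := by rw [div_le_one hc0]; linarith
    linarith
  have h2 : 1 - u ≤ (1 + u) ^ (-1:ℝ) := by
    rw [Real.rpow_neg_one]
    rw [← one_div, le_div_iff₀ (by linarith)]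
    nlinarith
  have h3 : 1 - u ≤ (1 + u) ^ (-(1:ℝ)/c) := h2.trans h1
  have hE : (Real.exp s) ^ (-(1:ℝ)/c) = Real.exp (-(1/c*s)) := by
    rw [← Real.exp_mul]; ring_nf
  rw [hmul, hE]
  have hEpos : 0 < Real.exp (-(1/c*s)) := Real.exp_pos _
  have := mul_le_mul_of_nonneg_left h3 hEpos.le
  calc Real.exp (-(1/c*s)) - Real.exp (-((1+1/c)*s))
      = Real.exp (-(1/c*s)) * (1 - u) := by
        rw [mul_sub, mul_one, hu, ← Real.exp_add]; ring_nf
    _ ≤ _ := this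



lemma gint (c : ℝ) (hc : 2 ≤ c) (x : ℝ) :
    IntegrableOn (fun s => (1 + Real.exp s) ^ (-(1:ℝ)/c)) (Set.Ioi x) := by
  have hc0 : (0:ℝ) < c := by linarith
  have hb : (0:ℝ) < 1/c := by positivity
  have hi : IntegrableOn (fun s => Real.exp (-(1/c*s))) (Set.Ioi x) := by
    simpa [neg_mul] using exp_neg_integrableOn_Ioi x hb
  apply hi.mono'
  · apply Continuous.aestronglyMeasurable
    apply Continuous.rpow_const (by continuity)
    intro s; left; positivity
  · filter_upwards with s
    rw [Real.norm_eq_abs, abs_of_pos (Real.rpow_pos_of_pos (by positivity) _)]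
    exact gub c hc s

lemma Gub (c : ℝ) (hc : 2 ≤ c) (x : ℝ) :
    ∫ s in Set.Ioi x, (1 + Real.exp s) ^ (-(1:ℝ)/c) ≤ c * Real.exp (-(1/c*x)) := by
  have hc0 : (0:ℝ) < c := by linarith
  have hb : (0:ℝ) < 1/c := by positivity
  have hi : IntegrableOn (fun s => Real.exp (-(1/c*s))) (Set.Ioi x) := by
    simpa [neg_mul] using exp_neg_integrableOn_Ioi x hb
  have h := setIntegral_mono_on (gint c hc x) hi measurableSet_Ioi (fun s _ => gub c hc s)
  rw [expint (1/c) x hb] at h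
  calc _ ≤ Real.exp (-(1/c*x)) / (1/c) := h
    _ = c * Real.exp (-(1/c*x)) := by field_simp

lemma Glb (c : ℝ) (hc : 2 ≤ c) (x : ℝ) :
    c * Real.exp (-(1/c*x)) - Real.exp (-((1+1/c)*x))
      ≤ ∫ s in Set.Ioi x, (1 + Real.exp s) ^ (-(1:ℝ)/c) := by
  have hc0 : (0:ℝ) < c := by linarith
  have hb : (0:ℝ) < 1/c := by positivity
  have hb2 : (0:ℝ) < 1 + 1/c := by positivity
  have hi1 : IntegrableOn (fun s => Real.exp (-(1/c*s))) (Set.Ioi x) := by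
    simpa [neg_mul] using exp_neg_integrableOn_Ioi x hb
  have hi2 : IntegrableOn (fun s => Real.exp (-((1+1/c)*s))) (Set.Ioi x) := by
    simpa [neg_mul, neg_add, add_mul, add_comm] using exp_neg_integrableOn_Ioi x hb2
  have h := setIntegral_mono_on (hi1.sub hi2) (gint c hc x) measurableSet_Ioi
    (fun s _ => glb c hc s)
  simp only [Pi.sub_apply] at h
  rw [integral_sub hi1 hi2, expint (1/c) x hb, expint (1+1/c) x hb2] at h
  have h2 : Real.exp (-((1+1/c)*x)) / (1+1/c) ≤ Real.exp (-((1+1/c)*x)) := by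
    rw [div_le_iff₀ hb2]
    nlinarith [Real.exp_pos (-((1+1/c)*x))]
  have h3 : Real.exp (-(1/c*x)) / (1/c) = c * Real.exp (-(1/c*x)) := by
    field_simp
  linarith

lemma Gmono (c : ℝ) (hc : 2 ≤ c) {x y : ℝ} (hxy : x ≤ y) :
    ∫ s in Set.Ioi y, (1 + Real.exp s) ^ (-(1:ℝ)/c)
      ≤ ∫ s in Set.Ioi x, (1 + Real.exp s) ^ (-(1:ℝ)/c) := by
  apply setIntegral_mono_set (gint c hc x)
  · filter_upwards with s
    exact Real.rpow_nonneg (by positivity) _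
  · exact (Set.Ioi_subset_Ioi hxy).eventuallyLE

lemma arith2 {v : ℝ} (hv0 : 0 < v) (hv : v < 1/2) : -Real.log (1-v) ≤ 2*v := by
  have hpos1 : (0:ℝ) < 1 - v := by linarith
  rw [← Real.log_inv]
  have h7 := Real.log_le_sub_one_of_pos (inv_pos.mpr hpos1)
  have heq : (1-v)⁻¹ - 1 = v/(1-v) := by field_simp; ring
  have h8 : v/(1-v) ≤ 2*v := by
    rw [div_le_iff₀ hpos1]; nlinarith
  rw [heq] at h7
  linarith

/-- Negative case asymptotics at `t → 0⁻`: for `φ₁` the inverse of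
`F₋(x) = -∫_x^∞ (1+eˢ)^{-1/(n+1)} ds`, one has
`φ₁(t) = -(n+1) log(-t/(n+1)) + O((-t)^{n+1})` as `t → 0⁻`; in particular
`φ₁(t) + (n+1) log(-t/(n+1)) → 0`. -/
theorem stmt4 (n : ℕ) (hn : 1 ≤ n) (φ : ℝ → ℝ)
    (hinv : ∀ t ∈ Set.Iio (0:ℝ),
      (- ∫ s in Set.Ioi (φ t), (1 + Real.exp s) ^ (-(1:ℝ) / ((n : ℝ) + 1))) = t)
    (hinv' : ∀ x : ℝ,
      φ (- ∫ s in Set.Ioi x, (1 + Real.exp s) ^ (-(1:ℝ) / ((n : ℝ) + 1))) = x) :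
    Tendsto (fun t => φ t + ((n : ℝ) + 1) * Real.log (-t / ((n : ℝ) + 1)))
      (nhdsWithin 0 (Set.Iio 0)) (nhds 0) ∧
    (fun t => φ t + ((n : ℝ) + 1) * Real.log (-t / ((n : ℝ) + 1)))
      =O[nhdsWithin 0 (Set.Iio 0)] fun t => (-t) ^ (n + 1) := by
  set c : ℝ := (n:ℝ) + 1 with hcdef
  have hn1 : (1:ℝ) ≤ (n:ℝ) := by exact_mod_cast hn
  have hc : 2 ≤ c := by rw [hcdef]; linarith
  have hc0 : (0:ℝ) < c := by linarith
  set G : ℝ → ℝ := fun x => ∫ s in Set.Ioi x, (1 + Real.exp s) ^ (-(1:ℝ)/c) with hGdef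
  have hGub : ∀ x, G x ≤ c * Real.exp (-(1/c*x)) := Gub c hc
  have hGlb : ∀ x, c * Real.exp (-(1/c*x)) - Real.exp (-((1+1/c)*x)) ≤ G x := Glb c hc
  have hexplog2 : Real.exp (-Real.log 2) = 1/2 := by
    rw [Real.exp_neg, Real.exp_log two_pos]; norm_num
  have hε : 0 < G (Real.log 2) := by
    have h1 := hGlb (Real.log 2)
    have h2 : Real.exp (-((1+1/c)*Real.log 2))
        = Real.exp (-(1/c*Real.log 2)) * Real.exp (-Real.log 2) := by
      rw [← Real.exp_add]; ring_nf
    have h3 := Real.exp_pos (-(1/c*Real.log 2))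
    rw [h2, hexplog2] at h1
    nlinarith
  have Key : ∀ t : ℝ, -G (Real.log 2) < t → t < 0 →
      |φ t + c * Real.log (-t/c)| ≤ (2*(2/c)^(n+1)) * (-t)^(n+1) := by
    intro t h1 h2
    set x := φ t with hx
    have hGx : G x = -t := by
      have := hinv t h2
      simp only [← hGdef, ← hx] at this
      linarith
    have hxgt : Real.log 2 < x := by
      by_contra h; push_neg at h
      have h3 : G (Real.log 2) ≤ G x := Gmono c hc h
      rw [hGx] at h3
      linarith
    set u := Real.exp (-x) with hu
    have hu0 : 0 < u := Real.exp_pos _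
    have hu2 : u < 1/2 := by
      rw [hu, ← hexplog2]
      exact Real.exp_lt_exp.mpr (by linarith)
    set E := Real.exp (-(1/c*x)) with hE
    have hE0 : 0 < E := Real.exp_pos _
    have hsplit : Real.exp (-((1+1/c)*x)) = E * u := by
      rw [hE, hu, ← Real.exp_add]; ring_nf
    have hub : -t ≤ c * E := by rw [← hGx]; exact hGub x
    have hlb : c*E - E*u ≤ -t := by
      have h4 : c * Real.exp (-(1/c*x)) - Real.exp (-((1+1/c)*x)) ≤ G x := hGlb x
      rw [hsplit, ← hE, hGx] at h4
      exact h4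
    have ht0 : 0 < -t := by linarith
    have hv : u/c < 1/2 := by
      have : u/c ≤ u/2 := by
        apply div_le_div_of_nonneg_left hu0.le (by norm_num) hc
      linarith
    have hv0 : 0 < u/c := by positivity
    have hpos1 : (0:ℝ) < 1 - u/c := by linarith
    have hfac : c*E*(1 - u/c) = c*E - E*u := by field_simp
    have hlogub : Real.log (-t/c) ≤ -(1/c*x) := by
      have h5 : -t/c ≤ E := by rw [div_le_iff₀ hc0]; linarith
      calc Real.log (-t/c) ≤ Real.log E := Real.log_le_log (by positivity) h5
        _ = -(1/c*x) := Real.log_exp _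
    have hloglb : -(1/c*x) + Real.log (1 - u/c) ≤ Real.log (-t/c) := by
      have h5 : E*(1-u/c) ≤ -t/c := by
        rw [le_div_iff₀ hc0]; nlinarith
      have h6 : Real.log (E*(1-u/c)) = -(1/c*x) + Real.log (1-u/c) := by
        rw [Real.log_mul hE0.ne' hpos1.ne', Real.log_exp]
      rw [← h6]
      exact Real.log_le_log (by positivity) h5
    have hcx : c * (1/c*x) = x := by field_simp
    have h8 : c * (2*(u/c)) = 2*u := by field_simp
    have habs : |x + c * Real.log (-t/c)| ≤ 2*u := by
      rw [abs_le]
      constructor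
      · have hA := mul_le_mul_of_nonneg_left hloglb hc0.le
        have hB := mul_le_mul_of_nonneg_left (arith2 hv0 hv) hc0.le
        have hC : c * (-(1/c*x) + Real.log (1-u/c))
            = -x + c * Real.log (1-u/c) := by
          rw [mul_add]; rw [show c * -(1/c*x) = -(c*(1/c*x)) by ring, hcx]
        rw [hC] at hA
        rw [show c * -Real.log (1-u/c) = -(c * Real.log (1-u/c)) by ring] at hB
        linarith
      · have hA := mul_le_mul_of_nonneg_left hlogub hc0.le
        rw [show c * -(1/c*x) = -(c*(1/c*x)) by ring, hcx] at hA
        linarith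
    have hEn : E^(n+1) = u := by
      have hne : c ≠ 0 := hc0.ne'
      rw [hE, hu, ← Real.exp_nat_mul]
      congr 1
      have hcast : ((n+1 : ℕ) : ℝ) = c := by push_cast [hcdef]; ring
      rw [hcast]
      field_simp
    have h8 : E*(c/2) ≤ -t := by nlinarith
    have h9 : (c/2)^(n+1) * u ≤ (-t)^(n+1) := by
      have h10 := pow_le_pow_left₀ (by positivity : (0:ℝ) ≤ E*(c/2)) h8 (n+1)
      rw [mul_pow, hEn] at h10
      linarith [h10]
    have h11 : (2/c)^(n+1) * ((c/2)^(n+1) * u) = u := by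
      rw [← mul_assoc, ← mul_pow]
      have : (2/c) * (c/2) = 1 := by field_simp
      rw [this, one_pow, one_mul]
    calc |φ t + c * Real.log (-t/c)| ≤ 2*u := habs
      _ = 2*((2/c)^(n+1) * ((c/2)^(n+1) * u)) := by rw [h11]
      _ ≤ (2*(2/c)^(n+1)) * (-t)^(n+1) := by
          rw [mul_assoc]
          apply mul_le_mul_of_nonneg_left _ (by norm_num)
          exact mul_le_mul_of_nonneg_left h9 (by positivity)
  have hO : (fun t => φ t + c * Real.log (-t/c))
      =O[nhdsWithin 0 (Set.Iio 0)] fun t => (-t)^(n+1) := by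
    apply IsBigO.of_bound (2*(2/c)^(n+1))
    filter_upwards [Ioo_mem_nhdsLT_of_mem
      (show (0:ℝ) ∈ Set.Ioc (-(G (Real.log 2))) 0 from ⟨by linarith, le_rfl⟩)] with t ht
    have h := Key t ht.1 ht.2
    have ht0 : 0 < -t := by simpa using ht.2
    rw [Real.norm_eq_abs, Real.norm_eq_abs, abs_of_pos (pow_pos ht0 (n+1))]
    exact h
  refine ⟨hO.trans_tendsto ?_, hO⟩
  have hcont : Tendsto (fun t : ℝ => (-t)^(n+1)) (nhds 0) (nhds 0) := by
    have := (continuous_neg.pow (n+1)).tendsto (0:ℝ)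
    simpa [Pi.pow_def] using this
  exact hcont.mono_left nhdsWithin_le_nhds
end

section
/- Fix n ≥ 1 and let φ₁(t) = F₊^{-1}(-t) as above. Then as t → 0⁻, φ₁(t) = c_n (-t)^{1+1/n} (1 + O((-t)^{1+1/n})), where c_n = (n/(n+1))^{(n+1)/n}. In particular, φ₁(t)/(-t)^{1+1/n} → c_n as t → 0⁻. -/
open Real MeasureTheory Filter Asymptotics

/-- Key two-sided bound: if `∫_{(0,x]} (1-e^{-s})^{-1/(n+1)} = -t` with `x>0`, `t<0`,
then `M - M^2/n ≤ x ≤ M` where `M = (n/(n+1))^((n+1)/n) * (-t)^(1+1/n)`. -/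
lemma stmt7_key (n : ℕ) (hn : 1 ≤ n) (x t : ℝ) (hx : 0 < x) (ht : t < 0)
    (h : (∫ s in Set.Ioc (0:ℝ) x, (1 - Real.exp (-s)) ^ (-(1:ℝ) / ((n : ℝ) + 1))) = -t) :
    x ≤ ((n : ℝ) / ((n : ℝ) + 1)) ^ (((n : ℝ) + 1) / (n : ℝ)) * (-t) ^ (1 + 1 / (n : ℝ)) ∧
    ((n : ℝ) / ((n : ℝ) + 1)) ^ (((n : ℝ) + 1) / (n : ℝ)) * (-t) ^ (1 + 1 / (n : ℝ))
      - (((n : ℝ) / ((n : ℝ) + 1)) ^ (((n : ℝ) + 1) / (n : ℝ))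
            * (-t) ^ (1 + 1 / (n : ℝ))) ^ 2 / (n : ℝ) ≤ x := by
  have hN : (0:ℝ) < (n:ℝ) := by exact_mod_cast Nat.lt_of_lt_of_le Nat.zero_lt_one hn
  set N : ℝ := (n:ℝ) with hNdef
  have hN1 : (0:ℝ) < N + 1 := by linarith
  set p : ℝ := 1 / (N + 1) with hpdef
  have hp : 0 < p := by positivity
  have hp1 : p < 1 := by
    rw [hpdef, div_lt_one hN1]; linarith
  have hpe : -(1:ℝ) / (N + 1) = -p := by rw [hpdef]; ring
  set a : ℝ := N / (N + 1) with hadef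
  have ha : 0 < a := by positivity
  have hpa : -p + 1 = a := by rw [hpdef, hadef]; field_simp; ring
  have hainv : a⁻¹ = (N + 1) / N := by rw [hadef]; field_simp
  have hb : 1 + 1 / N = a⁻¹ := by rw [hainv]; field_simp
  have hpaN : p * a⁻¹ = 1 / N := by rw [hpdef, hainv]; field_simp
  clear_value a p N
  set M : ℝ := a ^ a⁻¹ * (-t) ^ a⁻¹ with hMdef
  clear_value M
  have ht' : 0 < -t := by linarith
  -- pointwise bounds on the integrand
  have hbase : ∀ s : ℝ, 0 < s → 0 < 1 - Real.exp (-s) := by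
    intro s hs
    have : Real.exp (-s) < Real.exp 0 := Real.exp_lt_exp.mpr (by linarith)
    simp only [Real.exp_zero] at this; linarith
  have hub : ∀ s : ℝ, 0 < s → 1 - Real.exp (-s) ≤ s := by
    intro s hs
    have := Real.add_one_le_exp (-s); linarith
  have hlb : ∀ s : ℝ, 0 < s → s * Real.exp (-s) ≤ 1 - Real.exp (-s) := by
    intro s hs
    have h1 := Real.add_one_le_exp s
    have h2 : Real.exp (-s) * Real.exp s = 1 := by
      rw [← Real.exp_add]; simp
    nlinarith [Real.exp_pos (-s)]
  have h1 : ∀ s ∈ Set.Ioc (0:ℝ) x, s ^ (-p) ≤ (1 - Real.exp (-s)) ^ (-(1:ℝ) / (N + 1)) := by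
    intro s hs
    rw [hpe]
    exact Real.rpow_le_rpow_of_nonpos (hbase s hs.1) (hub s hs.1) (by linarith)
  have h2 : ∀ s ∈ Set.Ioc (0:ℝ) x,
      (1 - Real.exp (-s)) ^ (-(1:ℝ) / (N + 1)) ≤ s ^ (-p) * Real.exp (p * x) := by
    intro s hs
    rw [hpe]
    have step1 : (1 - Real.exp (-s)) ^ (-p) ≤ (s * Real.exp (-s)) ^ (-p) :=
      Real.rpow_le_rpow_of_nonpos (mul_pos hs.1 (Real.exp_pos _)) (hlb s hs.1) (by linarith)
    have step2 : (s * Real.exp (-s)) ^ (-p) = s ^ (-p) * Real.exp (p * s) := by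
      rw [Real.mul_rpow hs.1.le (Real.exp_pos _).le, ← Real.exp_mul]
      ring_nf
    have step3 : Real.exp (p * s) ≤ Real.exp (p * x) :=
      Real.exp_le_exp.mpr (by nlinarith [hs.2])
    calc (1 - Real.exp (-s)) ^ (-p) ≤ (s * Real.exp (-s)) ^ (-p) := step1
      _ = s ^ (-p) * Real.exp (p * s) := step2
      _ ≤ s ^ (-p) * Real.exp (p * x) := by
          have : (0:ℝ) ≤ s ^ (-p) := Real.rpow_nonneg hs.1.le _
          nlinarith
  -- integrability
  have hgl : IntegrableOn (fun s : ℝ => s ^ (-p)) (Set.Ioc 0 x) := by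
    have := intervalIntegral.intervalIntegrable_rpow' (a := 0) (b := x) (r := -p)
      (by linarith)
    exact (intervalIntegrable_iff_integrableOn_Ioc_of_le hx.le).mp this
  have hgu : IntegrableOn (fun s : ℝ => s ^ (-p) * Real.exp (p * x)) (Set.Ioc 0 x) :=
    hgl.mul_const _
  have hfm : AEStronglyMeasurable (fun s : ℝ => (1 - Real.exp (-s)) ^ (-(1:ℝ) / (N + 1)))
      (volume.restrict (Set.Ioc 0 x)) := by
    apply ContinuousOn.aestronglyMeasurable _ measurableSet_Ioc
    intro s hs
    apply ContinuousAt.continuousWithinAt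
    exact ContinuousAt.rpow_const (by fun_prop) (Or.inl (ne_of_gt (hbase s hs.1)))
  have hf : IntegrableOn (fun s : ℝ => (1 - Real.exp (-s)) ^ (-(1:ℝ) / (N + 1)))
      (Set.Ioc 0 x) := by
    apply Integrable.mono hgu hfm
    rw [ae_restrict_iff' measurableSet_Ioc]
    filter_upwards with s hs
    have h0 : (0:ℝ) ≤ (1 - Real.exp (-s)) ^ (-(1:ℝ) / (N + 1)) :=
      Real.rpow_nonneg (hbase s hs.1).le _
    have h0' : (0:ℝ) ≤ s ^ (-p) * Real.exp (p * x) := by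
      have := Real.rpow_nonneg hs.1.le (-p); positivity
    rw [Real.norm_eq_abs, Real.norm_eq_abs, abs_of_nonneg h0, abs_of_nonneg h0']
    exact h2 s hs
  -- integral values
  have hIl : (∫ s in Set.Ioc (0:ℝ) x, s ^ (-p)) = x ^ a / a := by
    rw [← intervalIntegral.integral_of_le hx.le, integral_rpow (Or.inl (by linarith))]
    rw [Real.zero_rpow (by rw [hpa]; exact ha.ne'), hpa]
    ring
  have hIu : (∫ s in Set.Ioc (0:ℝ) x, s ^ (-p) * Real.exp (p * x))
      = x ^ a / a * Real.exp (p * x) := by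
    rw [integral_mul_const, hIl]
  -- comparisons
  have hA : x ^ a / a ≤ -t := by
    rw [← h, ← hIl]
    exact setIntegral_mono_on hgl hf measurableSet_Ioc h1
  have hB : -t ≤ x ^ a / a * Real.exp (p * x) := by
    rw [← h, ← hIu]
    exact setIntegral_mono_on hf hgu measurableSet_Ioc h2
  -- upper bound x ≤ M
  have hxa : (0:ℝ) ≤ x ^ a := Real.rpow_nonneg hx.le _
  have hA' : x ^ a ≤ a * (-t) := by
    rw [div_le_iff₀ ha] at hA; linarith [hA]
  have hxM : x ≤ M := by
    rw [hMdef]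
    have := Real.rpow_le_rpow hxa hA' (inv_nonneg.mpr ha.le)
    rwa [Real.rpow_rpow_inv hx.le ha.ne', Real.mul_rpow ha.le ht'.le] at this
  have hM0 : 0 < M := lt_of_lt_of_le hx hxM
  -- lower bound
  have hB' : a * (-t) * Real.exp (-(p * x)) ≤ x ^ a := by
    have hexp : (0:ℝ) < Real.exp (p * x) := Real.exp_pos _
    have h3 : a * (-t) ≤ x ^ a * Real.exp (p * x) := by
      rw [div_mul_eq_mul_div, le_div_iff₀ ha] at hB
      linarith [hB]
    have h4 : Real.exp (-(p * x)) * Real.exp (p * x) = 1 := by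
      rw [← Real.exp_add]; simp
    nlinarith [Real.exp_pos (-(p * x))]
  have hlow : M * Real.exp (-(p * x) * a⁻¹) ≤ x := by
    rw [hMdef]
    have hbase0 : (0:ℝ) ≤ a * (-t) * Real.exp (-(p * x)) := by positivity
    have := Real.rpow_le_rpow hbase0 hB' (inv_nonneg.mpr ha.le)
    rwa [Real.rpow_rpow_inv hx.le ha.ne',
      Real.mul_rpow (by positivity) (Real.exp_pos _).le,
      Real.mul_rpow ha.le ht'.le, ← Real.exp_mul] at this
  have hexplb : 1 - x / N ≤ Real.exp (-(p * x) * a⁻¹) := by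
    have := Real.add_one_le_exp (-(p * x) * a⁻¹)
    have hxN : -(p * x) * a⁻¹ = -(x / N) := by
      rw [neg_mul, mul_comm p x, mul_assoc, hpaN]; field_simp
    rw [hxN] at this ⊢; linarith
  have hfinal : M - M ^ 2 / N ≤ x := by
    have step : M * (1 - x / N) ≤ M * Real.exp (-(p * x) * a⁻¹) :=
      mul_le_mul_of_nonneg_left hexplb hM0.le
    have hMlx : M * (1 - x / N) ≤ x := le_trans step hlow
    have hMx : M * x ≤ M ^ 2 := by
      rw [sq]; exact mul_le_mul_of_nonneg_left hxM hM0.le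
    have key : M * N - M ^ 2 ≤ x * N := by
      have h5 : M * (1 - x / N) * N ≤ x * N := mul_le_mul_of_nonneg_right hMlx hN.le
      have h6 : M * (1 - x / N) * N = M * N - M * x := by field_simp
      rw [h6] at h5
      linarith
    have h7 : M - M ^ 2 / N = (M * N - M ^ 2) / N := by field_simp
    rw [h7, div_le_iff₀ hN]
    linarith
  constructor
  · rw [hb, ← hainv, ← hMdef]; exact hxM
  · rw [hb, ← hainv, ← hMdef]; exact hfinal

/-- Positive case asymptotics at `t → 0⁻`: with `φ₁(t) = F₊⁻¹(-t)` one has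
`φ₁(t) = c_n (-t)^{1+1/n} (1 + O((-t)^{1+1/n}))` where `c_n = (n/(n+1))^{(n+1)/n}`;
in particular `φ₁(t)/(-t)^{1+1/n} → c_n` as `t → 0⁻`. -/
theorem stmt7 (n : ℕ) (hn : 1 ≤ n) (φ : ℝ → ℝ)
    (hpos : ∀ t < (0:ℝ), 0 < φ t)
    (hinv : ∀ t < (0:ℝ),
      (∫ s in Set.Ioc (0:ℝ) (φ t), (1 - Real.exp (-s)) ^ (-(1:ℝ) / ((n : ℝ) + 1))) = -t) :
    (fun t => φ t - ((n : ℝ) / ((n : ℝ) + 1)) ^ (((n : ℝ) + 1) / (n : ℝ))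
          * (-t) ^ (1 + 1 / (n : ℝ)))
      =O[nhdsWithin 0 (Set.Iio 0)] (fun t => ((-t) ^ (1 + 1 / (n : ℝ))) ^ 2) ∧
    Tendsto (fun t => φ t / (-t) ^ (1 + 1 / (n : ℝ)))
      (nhdsWithin 0 (Set.Iio 0))
      (nhds (((n : ℝ) / ((n : ℝ) + 1)) ^ (((n : ℝ) + 1) / (n : ℝ)))) := by
  have hN : (0:ℝ) < (n:ℝ) := by exact_mod_cast Nat.lt_of_lt_of_le Nat.zero_lt_one hn
  set cn : ℝ := ((n : ℝ) / ((n : ℝ) + 1)) ^ (((n : ℝ) + 1) / (n : ℝ)) with hcn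
  have hcn0 : 0 < cn := Real.rpow_pos_of_pos (by positivity) _
  set b : ℝ := 1 + 1 / (n : ℝ) with hbdef
  have hb0 : 0 < b := by positivity
  have hkey : ∀ t < (0:ℝ),
      |φ t - cn * (-t) ^ b| ≤ cn ^ 2 / (n:ℝ) * ((-t) ^ b) ^ 2 := by
    intro t ht
    obtain ⟨h1, h2⟩ := stmt7_key n hn (φ t) t (hpos t ht) ht (hinv t ht)
    rw [abs_le]
    constructor
    · have : (cn * (-t) ^ b) ^ 2 / (n:ℝ) = cn ^ 2 / (n:ℝ) * ((-t) ^ b) ^ 2 := by ring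
      rw [← this]; linarith
    · have h3 : (0:ℝ) ≤ cn ^ 2 / (n:ℝ) * ((-t) ^ b) ^ 2 := by positivity
      linarith
  have hτpos : ∀ t < (0:ℝ), 0 < (-t) ^ b := fun t ht =>
    Real.rpow_pos_of_pos (by linarith) _
  refine ⟨?_, ?_⟩
  · rw [isBigO_iff]
    refine ⟨cn ^ 2 / (n:ℝ), ?_⟩
    filter_upwards [self_mem_nhdsWithin] with t ht
    have ht' : t < 0 := ht
    have := hkey t ht'
    rw [Real.norm_eq_abs, Real.norm_eq_abs, abs_of_nonneg (sq_nonneg ((-t) ^ b))]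
    exact this
  · have htend0 : Tendsto (fun t : ℝ => (-t) ^ b) (nhdsWithin 0 (Set.Iio 0)) (nhds 0) := by
      have hc : ContinuousAt (fun y : ℝ => y ^ b) 0 :=
        Real.continuousAt_rpow_const 0 _ (Or.inr hb0.le)
      have hneg : Tendsto (fun t : ℝ => -t) (nhdsWithin 0 (Set.Iio 0)) (nhds 0) := by
        simpa using
          (tendsto_id.mono_left nhdsWithin_le_nhds : Tendsto id (nhdsWithin (0:ℝ) (Set.Iio 0)) (nhds 0)).neg
      have := hc.tendsto.comp hneg
      simpa [Real.zero_rpow hb0.ne', Function.comp_def] using this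
    have hsub : Tendsto (fun t => φ t / (-t) ^ b - cn) (nhdsWithin 0 (Set.Iio 0)) (nhds 0) := by
      apply squeeze_zero_norm' (a := fun t => cn ^ 2 / (n:ℝ) * ((-t) ^ b))
      · filter_upwards [self_mem_nhdsWithin] with t ht
        have ht' : t < 0 := ht
        have hτ := hτpos t ht'
        have hk := hkey t ht'
        have heq : φ t / (-t) ^ b - cn = (φ t - cn * (-t) ^ b) / (-t) ^ b := by
          field_simp
        rw [Real.norm_eq_abs, heq, abs_div, abs_of_nonneg hτ.le]
        rw [div_le_iff₀ hτ]
        calc |φ t - cn * (-t) ^ b| ≤ cn ^ 2 / (n:ℝ) * ((-t) ^ b) ^ 2 := hk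
          _ = cn ^ 2 / (n:ℝ) * (-t) ^ b * (-t) ^ b := by ring
      · have := htend0.const_mul (cn ^ 2 / (n:ℝ))
        simpa using this
    have := hsub.add (tendsto_const_nhds (x := cn))
    simpa using this
end

section
/- (Maximum principle comparison for Monge–Ampère potentials.) Let U ⊂ ℂⁿ be open, let ψ, ψ̂ be smooth strictly plurisubharmonic functions on U∖D (D a closed subset), satisfying (i∂∂̄ψ)ⁿ = e^{ψ} Ω and (i∂∂̄ψ̂)ⁿ = e^{ψ̂ + F} Ω on U∖D for a smooth positive volume form Ω and a function F with ‖F‖_∞ ≤ C₁. Suppose ψ̂ − ψ extends continuously to Ū, tends to −∞ faster than any δ·t near D when perturbed by δt for a plurisubharmonic exhaustion t ≤ 0 with i∂∂̄t ≥ 0, and ψ̂ − ψ ≤ C₁ on ∂U. Then ψ̂ − ψ ≤ C₁ on U∖D. -/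
open Real
open scoped ComplexOrder

open scoped Matrix Topology

/-- The complex Hessian matrix `(∂²ψ/∂z_j∂z̄_k)_{j,k}` of a real-valued function on `ℂᴺ`,
expressed through second real directional derivatives. -/
noncomputable def cHess (N : ℕ) (ψ : EuclideanSpace ℂ (Fin N) → ℝ)
    (z : EuclideanSpace ℂ (Fin N)) : Matrix (Fin N) (Fin N) ℂ :=
  fun j k =>
    let e : Fin N → EuclideanSpace ℂ (Fin N) := fun i => EuclideanSpace.single i 1
    let B : EuclideanSpace ℂ (Fin N) → EuclideanSpace ℂ (Fin N) → ℝ :=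
      fun u v => iteratedFDeriv ℝ 2 ψ z ![u, v]
    (((B (e j) (e k) + B (Complex.I • e j) (Complex.I • e k) : ℝ) : ℂ)
      + Complex.I * ((B (e j) (Complex.I • e k) - B (Complex.I • e j) (e k) : ℝ) : ℂ)) / 4


lemma det_one_add_psd {n : Type*} [Fintype n] [DecidableEq n] {M : Matrix n n ℂ}
    (hM : M.PosSemidef) : ∃ c : ℝ, 1 ≤ c ∧ (1 + M).det = (c : ℂ) := by
  classical
  set U : Matrix n n ℂ := (hM.1.eigenvectorUnitary : Matrix n n ℂ)
  have hU : U * star U = 1 := hM.1.eigenvectorUnitary.prop.2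
  have spec := hM.1.spectral_theorem
  set d : n → ℝ := hM.1.eigenvalues
  have h1 : (1:ℝ) ≤ ∏ i, (1 + d i) := by
    calc (1:ℝ) = ∏ _i : n, 1 := by simp
      _ ≤ ∏ i, (1 + d i) := Finset.prod_le_prod (by intros; norm_num)
          (fun i _ => by linarith [hM.eigenvalues_nonneg i])
  refine ⟨∏ i, (1 + d i), h1, ?_⟩
  have key : 1 + M = U * (1 + Matrix.diagonal (RCLike.ofReal ∘ d)) * star U := by
    rw [Matrix.mul_add, Matrix.add_mul, Matrix.mul_one, hU, spec, Unitary.conjStarAlgAut_apply]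
  have hUdet : U.det * (star U).det = 1 := by rw [← Matrix.det_mul, hU, Matrix.det_one]
  rw [key, Matrix.det_mul, Matrix.det_mul]
  rw [mul_right_comm, hUdet, one_mul]
  have : (1 : Matrix n n ℂ) + Matrix.diagonal (RCLike.ofReal ∘ d)
      = Matrix.diagonal (fun i => ((1 + d i : ℝ) : ℂ)) := by
    rw [← Matrix.diagonal_one, Matrix.diagonal_add]
    funext i; push_cast; rfl
  rw [this, Matrix.det_diagonal]
  push_cast
  rfl

lemma det_mono_psd {n : Type*} [Fintype n] [DecidableEq n] {A B : Matrix n n ℂ}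
    (hA : A.PosDef) (hBA : (B - A).PosSemidef) : A.det ≤ B.det := by
  classical
  set S := (by open scoped MatrixOrder in exact CFC.sqrt A : Matrix n n ℂ) with hSdef
  have hS : S.PosSemidef := by
    open scoped MatrixOrder in exact Matrix.nonneg_iff_posSemidef.mp (CFC.sqrt_nonneg A)
  have hSS : S * S = A := by
    open scoped MatrixOrder in
    exact CFC.sqrt_mul_sqrt_self A (Matrix.nonneg_iff_posSemidef.mpr hA.posSemidef)
  have hdetA : (0:ℂ) < A.det := hA.det_pos
  have hdetS : S.det * S.det = A.det := by rw [← Matrix.det_mul, hSS]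
  have hSunit : IsUnit S.det := by
    rw [isUnit_iff_ne_zero]
    intro h
    rw [h, mul_zero] at hdetS
    exact hdetA.ne' hdetS.symm
  have hSh : S.conjTranspose = S := hS.isHermitian
  have hSinvh : (S⁻¹).conjTranspose = S⁻¹ := by rw [Matrix.conjTranspose_nonsing_inv, hSh]
  set M := (S⁻¹).conjTranspose * (B - A) * S⁻¹ with hMdef
  have hMpsd : M.PosSemidef := hBA.conjTranspose_mul_mul_same _
  have key : B = S * (1 + M) * S := by
    rw [Matrix.mul_add, Matrix.add_mul, Matrix.mul_one, hSS, hMdef, hSinvh]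
    have : S * (S⁻¹ * (B - A) * S⁻¹) * S = B - A := by
      rw [← Matrix.mul_assoc, ← Matrix.mul_assoc, Matrix.mul_nonsing_inv S hSunit, Matrix.one_mul,
        Matrix.mul_assoc, Matrix.nonsing_inv_mul S hSunit, Matrix.mul_one]
    rw [this]; abel
  obtain ⟨c, hc1, hcdet⟩ := det_one_add_psd hMpsd
  have : B.det = A.det * (c : ℂ) := by
    rw [key, Matrix.det_mul, Matrix.det_mul, hcdet, ← hdetS]; ring
  rw [this]
  calc A.det = A.det * 1 := by ring
    _ ≤ A.det * (c : ℂ) := by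
        apply mul_le_mul_of_nonneg_left _ hdetA.le
        rw [show (1:ℂ) = ((1:ℝ):ℂ) by norm_num, Complex.real_le_real]
        exact hc1

lemma vec_decomp (N : ℕ) (u : EuclideanSpace ℂ (Fin N)) :
    u = ∑ j, ((u j).re • EuclideanSpace.single j (1:ℂ)
        + (u j).im • (Complex.I • EuclideanSpace.single j (1:ℂ))) := by
  ext k
  rw [WithLp.ofLp_sum, Finset.sum_apply]
  rw [Finset.sum_eq_single k]
  · simp [EuclideanSpace.single_apply, Complex.ext_iff]
  · intro b _ hb
    simp [EuclideanSpace.single_apply, Ne.symm hb]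
  · simp

lemma bilin_expand (N : ℕ)
    (B2 : EuclideanSpace ℂ (Fin N) →L[ℝ] EuclideanSpace ℂ (Fin N) →L[ℝ] ℝ)
    (u w : EuclideanSpace ℂ (Fin N)) :
    B2 u w = ∑ j, ∑ k,
      ((u j).re * (w k).re * B2 (EuclideanSpace.single j 1) (EuclideanSpace.single k 1)
      + (u j).re * (w k).im * B2 (EuclideanSpace.single j 1) (Complex.I • EuclideanSpace.single k 1)
      + (u j).im * (w k).re * B2 (Complex.I • EuclideanSpace.single j 1) (EuclideanSpace.single k 1)
      + (u j).im * (w k).im * B2 (Complex.I • EuclideanSpace.single j 1) (Complex.I • EuclideanSpace.single k 1)) := by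
  conv_lhs => rw [vec_decomp N u, vec_decomp N w]
  simp only [map_sum, map_add, map_smul, ContinuousLinearMap.sum_apply,
    ContinuousLinearMap.add_apply, ContinuousLinearMap.smul_apply, smul_eq_mul,
    ContinuousLinearMap.coe_sum', Finset.sum_apply, ContinuousLinearMap.coe_smul',
    Pi.smul_apply, ContinuousLinearMap.coe_add', Pi.add_apply]
  rw [Finset.sum_comm]
  refine Finset.sum_congr rfl (fun j _ => ?_)
  rw [Finset.mul_sum, Finset.mul_sum, ← Finset.sum_add_distrib]
  exact Finset.sum_congr rfl (fun k _ => by ring)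
def cv (N : ℕ) (v : Fin N → ℂ) : EuclideanSpace ℂ (Fin N) := WithLp.toLp 2 (fun j => (starRingEnd ℂ) (v j))

lemma cHess_entry (N : ℕ) (f : EuclideanSpace ℂ (Fin N) → ℝ) (z : EuclideanSpace ℂ (Fin N))
    (j k : Fin N) : cHess N f z j k =
    (((fderiv ℝ (fderiv ℝ f) z (EuclideanSpace.single j 1) (EuclideanSpace.single k 1)
       + fderiv ℝ (fderiv ℝ f) z (Complex.I • EuclideanSpace.single j 1) (Complex.I • EuclideanSpace.single k 1) : ℝ) : ℂ)
     + Complex.I * ((fderiv ℝ (fderiv ℝ f) z (EuclideanSpace.single j 1) (Complex.I • EuclideanSpace.single k 1)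
       - fderiv ℝ (fderiv ℝ f) z (Complex.I • EuclideanSpace.single j 1) (EuclideanSpace.single k 1) : ℝ) : ℂ)) / 4 := by
  simp only [cHess, iteratedFDeriv_two_apply, Matrix.cons_val_zero, Matrix.cons_val_one,
    Matrix.head_cons]
lemma real_of_herm (N : ℕ) (M : Matrix (Fin N) (Fin N) ℂ) (hherm : M.IsHermitian)
    (v : Fin N → ℂ) :
    ((dotProduct (star v) (M *ᵥ v)).re : ℂ) = dotProduct (star v) (M *ᵥ v) := by
  apply Complex.conj_eq_iff_re.mp
  calc (starRingEnd ℂ) (dotProduct (star v) (M *ᵥ v))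
      = star (dotProduct (star v) (M *ᵥ v)) := rfl
    _ = star (M *ᵥ v) ⬝ᵥ star (star v) := by rw [Matrix.star_dotProduct_star]
    _ = (star v ᵥ* Mᴴ) ⬝ᵥ v := by rw [Matrix.star_mulVec, star_star]
    _ = star v ⬝ᵥ (Mᴴ *ᵥ v) := (Matrix.dotProduct_mulVec _ _ _).symm
    _ = dotProduct (star v) (M *ᵥ v) := by rw [hherm.eq]

lemma cHess_dot (N : ℕ) (f : EuclideanSpace ℂ (Fin N) → ℝ) (z : EuclideanSpace ℂ (Fin N))
    (hherm : (cHess N f z).IsHermitian) (v : Fin N → ℂ) :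
    dotProduct (star v) (cHess N f z *ᵥ v)
      = (((fderiv ℝ (fderiv ℝ f) z (cv N v) (cv N v)
          + fderiv ℝ (fderiv ℝ f) z (Complex.I • cv N v) (Complex.I • cv N v)) / 4 : ℝ) : ℂ) := by
  rw [← real_of_herm N _ hherm v]
  norm_cast
  have hdot : dotProduct (star v) (cHess N f z *ᵥ v)
      = ∑ j, ∑ k, (starRingEnd ℂ) (v j) * (cHess N f z j k * v k) := by
    simp [dotProduct, Matrix.mulVec, Finset.mul_sum, RCLike.star_def]
  have hcv : ∀ j, cv N v j = (starRingEnd ℂ) (v j) := fun _ => rfl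
  have hIcv : ∀ j, (Complex.I • cv N v) j = Complex.I * (starRingEnd ℂ) (v j) := fun _ => rfl
  rw [hdot, bilin_expand, bilin_expand, Complex.re_sum,
    ← Finset.sum_add_distrib, Finset.sum_div]
  refine Finset.sum_congr rfl fun j _ => ?_
  rw [Complex.re_sum, ← Finset.sum_add_distrib, Finset.sum_div]
  refine Finset.sum_congr rfl fun k _ => ?_
  rw [cHess_entry, hcv, hcv, hIcv, hIcv,
    show ∀ z : ℂ, z / 4 = ((4⁻¹:ℝ):ℂ) * z from fun z => by push_cast; ring]
  simp only [Complex.mul_re, Complex.mul_im, Complex.add_re, Complex.add_im, Complex.sub_re,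
    Complex.sub_im, Complex.I_re, Complex.I_im, Complex.ofReal_re, Complex.ofReal_im,
    Complex.conj_re, Complex.conj_im]
  ring
open scoped Topology

lemma deriv2_nonpos_of_isLocalMax {g : ℝ → ℝ} (hg : ContDiffAt ℝ 2 g 0)
    (hmax : IsLocalMax g 0) : deriv (deriv g) 0 ≤ 0 := by
  by_contra hpos
  push_neg at hpos
  -- g is C² on a neighborhood
  obtain ⟨u, hu, hgu⟩ : ∃ u ∈ 𝓝 (0:ℝ), ContDiffOn ℝ 2 g u := hg.contDiffOn le_rfl (by simp)
  have hderiv0 : deriv g 0 = 0 := hmax.deriv_eq_zero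
  -- derivative of deriv g at 0
  have hdiffderiv : DifferentiableAt ℝ (deriv g) 0 := by
    have h1 : DifferentiableAt ℝ (fderiv ℝ g) 0 :=
      (hg.fderiv_right (m := 1) le_rfl).differentiableAt one_ne_zero
    have : deriv g = fun y => fderiv ℝ g y 1 := by
      funext y; rw [← fderiv_apply_one_eq_deriv]
    rw [this]
    exact h1.clm_apply (differentiableAt_const _)
  have hslope : ∀ᶠ y in 𝓝[≠] (0:ℝ), 0 < slope (deriv g) 0 y := by
    have := hdiffderiv.hasDerivAt
    rw [hasDerivAt_iff_tendsto_slope] at this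
    exact this (Ioi_mem_nhds hpos)
  rw [eventually_nhdsWithin_iff] at hslope
  obtain ⟨ε, hε, hball⟩ := Metric.eventually_nhds_iff.mp (hslope.and (hmax.and (eventually_mem_nhds_iff.mpr hu)))
  have hc : 0 < ε/2 := by linarith
  have hsub : Set.Icc (0:ℝ) (ε/2) ⊆ u := by
    intro y hy
    have : dist y 0 < ε := by
      rw [Real.dist_eq, sub_zero, abs_of_nonneg hy.1]; linarith [hy.2]
    exact mem_of_mem_nhds (hball this).2.2
  have hcont : ContinuousOn g (Set.Icc 0 (ε/2)) := hgu.continuousOn.mono hsub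
  have hderivpos : ∀ y ∈ interior (Set.Icc (0:ℝ) (ε/2)), 0 < deriv g y := by
    rw [interior_Icc]
    intro y hy
    have hdist : dist y 0 < ε := by
      rw [Real.dist_eq, sub_zero, abs_of_pos hy.1]; linarith [hy.2]
    have hsl := (hball hdist).1 (ne_of_gt hy.1)
    rw [slope_def_field, hderiv0, sub_zero, sub_zero] at hsl
    have := mul_pos hsl hy.1
    rwa [div_mul_cancel₀ _ (ne_of_gt hy.1)] at this
  have hmono := strictMonoOn_of_deriv_pos (convex_Icc _ _) hcont hderivpos
  have h1 : g 0 < g (ε/2) :=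
    hmono (Set.left_mem_Icc.mpr hc.le) (Set.right_mem_Icc.mpr hc.le) hc
  have h2 : g (ε/2) ≤ g 0 := by
    have : dist (ε/2) 0 < ε := by rw [Real.dist_eq, sub_zero, abs_of_pos hc]; linarith
    exact (hball this).2.1
  linarith

lemma snd_deriv_nonpos_of_isLocalMax {E : Type*} [NormedAddCommGroup E] [NormedSpace ℝ E]
    {f : E → ℝ} {x : E} (hf : ContDiffAt ℝ 2 f x) (hmax : IsLocalMax f x) (v : E) :
    fderiv ℝ (fderiv ℝ f) x v v ≤ 0 := by
  set L : ℝ → E := fun s => x + s • v with hLdef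
  have hLc : ContDiff ℝ 2 L := contDiff_const.add (contDiff_id.smul contDiff_const)
  have hL0 : L 0 = x := by simp [hLdef]
  have hdL : ∀ s : ℝ, HasDerivAt L v s := by
    intro s
    have h1 : HasDerivAt (fun y : ℝ => y • v) ((1:ℝ) • v) s := (hasDerivAt_id s).smul_const v
    rw [one_smul] at h1
    exact h1.const_add x
  have hg : ContDiffAt ℝ 2 (f ∘ L) 0 := (hL0.symm ▸ hf).comp 0 hLc.contDiffAt
  have htend : Filter.Tendsto L (𝓝 0) (𝓝 x) := by
    rw [← hL0]; exact hLc.continuous.continuousAt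
  have hgmax : IsLocalMax (f ∘ L) 0 := by
    have := htend.eventually hmax
    simpa [IsLocalMax, IsMaxFilter, hL0] using this
  obtain ⟨u, hu, hfu⟩ : ∃ u ∈ 𝓝 x, ContDiffOn ℝ 2 f u := hf.contDiffOn le_rfl (by simp)
  obtain ⟨w, hwu, hw, hxw⟩ := mem_nhds_iff.mp hu
  have hdiff : ∀ y ∈ w, DifferentiableAt ℝ f y := fun y hy =>
    ((hfu.mono hwu).contDiffAt (hw.mem_nhds hy)).differentiableAt two_ne_zero
  have h1 : (fun s => deriv (f ∘ L) s) =ᶠ[𝓝 (0:ℝ)] fun s => fderiv ℝ f (L s) v := by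
    filter_upwards [htend.eventually (hw.mem_nhds hxw)] with s hs
    exact ((hdiff _ hs).hasFDerivAt.comp_hasDerivAt s (hdL s)).deriv
  have hd2 : DifferentiableAt ℝ (fderiv ℝ f) x :=
    (hf.fderiv_right (m := 1) le_rfl).differentiableAt one_ne_zero
  have hcomp : HasDerivAt (fun s => fderiv ℝ f (L s)) (fderiv ℝ (fderiv ℝ f) x v) 0 := by
    have := (hL0.symm ▸ hd2).hasFDerivAt.comp_hasDerivAt 0 (hdL 0)
    exact (by simpa [hL0] using this : HasDerivAt (fderiv ℝ f ∘ L) (fderiv ℝ (fderiv ℝ f) x v) 0)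
  have h2 : HasDerivAt (fun s => fderiv ℝ f (L s) v) (fderiv ℝ (fderiv ℝ f) x v v) 0 := by
    have := hcomp.clm_apply (hasDerivAt_const 0 v)
    simpa [hL0] using this
  have key : deriv (deriv (f ∘ L)) 0 = fderiv ℝ (fderiv ℝ f) x v v := by
    rw [Filter.EventuallyEq.deriv_eq h1, h2.deriv]
  rw [← key]
  exact deriv2_nonpos_of_isLocalMax hg hgmax

lemma snd_fderiv_combo {E : Type*} [NormedAddCommGroup E] [NormedSpace ℝ E]
    {f1 f2 f3 : E → ℝ} {s : Set E} (hs : IsOpen s) {x : E} (hx : x ∈ s)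
    (h1 : ContDiffOn ℝ 2 f1 s) (h2 : ContDiffOn ℝ 2 f2 s) (h3 : ContDiffOn ℝ 2 f3 s)
    (δ : ℝ) (u : E) :
    fderiv ℝ (fderiv ℝ (fun y => f1 y - f2 y + δ * f3 y)) x u u
      = fderiv ℝ (fderiv ℝ f1) x u u - fderiv ℝ (fderiv ℝ f2) x u u
        + δ * fderiv ℝ (fderiv ℝ f3) x u u := by
  have hD : ∀ (g : E → ℝ), ContDiffOn ℝ 2 g s → ∀ y ∈ s, DifferentiableAt ℝ g y := fun g hg y hy =>
    (hg.contDiffAt (hs.mem_nhds hy)).differentiableAt two_ne_zero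
  have heq : (fderiv ℝ (fun y => f1 y - f2 y + δ * f3 y))
      =ᶠ[𝓝 x] fun y => fderiv ℝ f1 y - fderiv ℝ f2 y + δ • fderiv ℝ f3 y := by
    filter_upwards [hs.mem_nhds hx] with y hy
    rw [fderiv_fun_add (f := fun y => f1 y - f2 y) ((hD _ h1 y hy).sub (hD _ h2 y hy)) ((hD _ h3 y hy).const_mul δ),
      fderiv_fun_sub (hD _ h1 y hy) (hD _ h2 y hy), fderiv_const_mul (hD _ h3 y hy) δ]
  have hF : ∀ (g : E → ℝ), ContDiffOn ℝ 2 g s → DifferentiableAt ℝ (fderiv ℝ g) x := fun g hg =>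
    ((hg.contDiffAt (hs.mem_nhds hx)).fderiv_right (m := 1) le_rfl).differentiableAt one_ne_zero
  rw [heq.fderiv_eq, fderiv_fun_add (f := fun y => fderiv ℝ f1 y - fderiv ℝ f2 y)
      (g := fun y => δ • fderiv ℝ f3 y) ((hF _ h1).sub (hF _ h2)) ((hF _ h3).const_smul δ),
    fderiv_fun_sub (hF _ h1) (hF _ h2), fderiv_fun_const_smul (hF _ h3) δ]
  simp [ContinuousLinearMap.add_apply, ContinuousLinearMap.sub_apply,
    ContinuousLinearMap.smul_apply]

/-- Maximum principle comparison for Monge–Ampère potentials (Lemma 4.1).  If `ψ, ψ̂` are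
smooth strictly plurisubharmonic on `U∖D` with `(i∂∂̄ψ)ⁿ = e^ψ Ω` and
`(i∂∂̄ψ̂)ⁿ = e^{ψ̂+F} Ω`, `‖F‖_∞ ≤ C₁`, `ψ̂-ψ` extends continuously to `Ū`, tends to `-∞`
near `D` even after adding `δt` (`t ≤ 0` plurisubharmonic), and `ψ̂-ψ ≤ C₁` on `∂U`,
then `ψ̂ - ψ ≤ C₁` on `U∖D`. -/
theorem stmt11 (N : ℕ) (U D : Set (EuclideanSpace ℂ (Fin N)))
    (hU : IsOpen U) (hD : IsClosed D) (hUc : IsCompact (closure U))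
    (ψ ψhat t F Ω : EuclideanSpace ℂ (Fin N) → ℝ) (C₁ : ℝ)
    (hψ : ContDiffOn ℝ (⊤ : ℕ∞) ψ (U \ D))
    (hψhat : ContDiffOn ℝ (⊤ : ℕ∞) ψhat (U \ D))
    (ht : ContDiffOn ℝ (⊤ : ℕ∞) t (U \ D))
    (hψpsh : ∀ z ∈ U \ D, (cHess N ψ z).PosDef)
    (hψhatpsh : ∀ z ∈ U \ D, (cHess N ψhat z).PosDef)
    (htpsh : ∀ z ∈ U \ D, (cHess N t z).PosSemidef)
    (htneg : ∀ z ∈ U, t z ≤ 0)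
    (hΩ : ∀ z ∈ U \ D, 0 < Ω z)
    (hMA1 : ∀ z ∈ U \ D, (cHess N ψ z).det = ((Real.exp (ψ z) * Ω z : ℝ) : ℂ))
    (hMA2 : ∀ z ∈ U \ D,
        (cHess N ψhat z).det = ((Real.exp (ψhat z + F z) * Ω z : ℝ) : ℂ))
    (hF : ∀ z ∈ U \ D, |F z| ≤ C₁)
    (hcont : ContinuousOn (fun z => ψhat z - ψ z) (closure U))
    (hexh : ∀ δ > (0:ℝ), ∀ M : ℝ, ∃ V : Set (EuclideanSpace ℂ (Fin N)),
        IsOpen V ∧ D ∩ closure U ⊆ V ∧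
        ∀ z ∈ (U \ D) ∩ V, ψhat z - ψ z + δ * t z ≤ -M)
    (hbd : ∀ z ∈ frontier U, ψhat z - ψ z ≤ C₁) :
    ∀ z ∈ U \ D, ψhat z - ψ z ≤ C₁ := by
  intro z₀ hz₀
  have hUDopen : IsOpen (U \ D) := hU.sdiff hD
  have hψ2 : ContDiffOn ℝ 2 ψ (U \ D) := hψ.of_le (by norm_cast)
  have hψhat2 : ContDiffOn ℝ 2 ψhat (U \ D) := hψhat.of_le (by norm_cast)
  have ht2 : ContDiffOn ℝ 2 t (U \ D) := ht.of_le (by norm_cast)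
  suffices hδ : ∀ δ > (0:ℝ), ψhat z₀ - ψ z₀ + δ * t z₀ ≤ C₁ by
    have htz : t z₀ ≤ 0 := htneg z₀ hz₀.1
    refine le_of_forall_pos_le_add fun ε hε => ?_
    have h1t : (0:ℝ) < 1 - t z₀ := by linarith
    have hδ' := hδ (ε / (1 - t z₀)) (by positivity)
    have : ε / (1 - t z₀) * t z₀ ≥ -ε := by
      rw [ge_iff_le, div_mul_eq_mul_div, le_div_iff₀ h1t]
      nlinarith
    linarith
  intro δ hδpos
  obtain ⟨V, hVopen, hVD, hVbd⟩ := hexh δ hδpos |C₁|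
  set H : EuclideanSpace ℂ (Fin N) → ℝ := fun z => ψhat z - ψ z + δ * t z with hHdef
  obtain ⟨m, hm, hmmax⟩ := hUc.exists_isMaxOn ⟨z₀, subset_closure hz₀.1⟩ hcont
  have hHle : ∀ z ∈ U \ D, H z ≤ ψhat m - ψ m := by
    intro z hz
    have h1 : ψhat z - ψ z ≤ ψhat m - ψ m := hmmax (subset_closure hz.1)
    have h2 : δ * t z ≤ 0 := mul_nonpos_of_nonneg_of_nonpos hδpos.le (htneg z hz.1)
    simp only [hHdef]; linarith
  have hne : (H '' (U \ D)).Nonempty := ⟨H z₀, ⟨z₀, hz₀, rfl⟩⟩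
  have hbdd : BddAbove (H '' (U \ D)) := by
    refine ⟨ψhat m - ψ m, ?_⟩
    rintro y ⟨z, hz, rfl⟩
    exact hHle z hz
  set S := sSup (H '' (U \ D)) with hSdef
  have hz₀S : H z₀ ≤ S := le_csSup hbdd ⟨z₀, hz₀, rfl⟩
  suffices hS : S ≤ C₁ by exact le_trans hz₀S hS
  have hseq : ∀ n : ℕ, ∃ z ∈ U \ D, S - 1/((n:ℝ)+1) < H z := by
    intro n
    have hlt : S - 1/((n:ℝ)+1) < S := by
      have : (0:ℝ) < 1/((n:ℝ)+1) := by positivity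
      linarith
    obtain ⟨y, hy, hy2⟩ := exists_lt_of_lt_csSup hne hlt
    obtain ⟨z, hz, rfl⟩ := hy
    exact ⟨z, hz, hy2⟩
  choose seq hseqU hseqlt using hseq
  have hseqcl : ∀ n, seq n ∈ closure U := fun n => subset_closure (hseqU n).1
  obtain ⟨x, hxcl, φ, hφ, hφtend⟩ := hUc.tendsto_subseq hseqcl
  have hHtend : Filter.Tendsto (fun n => H (seq (φ n))) Filter.atTop (𝓝 S) := by
    apply tendsto_of_tendsto_of_tendsto_of_le_of_le
      (g := fun n => S - 1/((φ n : ℝ)+1)) (h := fun _ => S)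
    · have h0 : Filter.Tendsto (fun m : ℕ => 1/((m:ℝ)+1)) Filter.atTop (𝓝 0) :=
        tendsto_one_div_add_atTop_nhds_zero_nat
      have := (h0.comp hφ.tendsto_atTop).const_sub S
      simpa using this
    · exact tendsto_const_nhds
    · exact fun n => (hseqlt (φ n)).le
    · exact fun n => le_csSup hbdd ⟨seq (φ n), hseqU (φ n), rfl⟩
  by_cases hxV : x ∈ V
  · have hev : ∀ᶠ n in Filter.atTop, H (seq (φ n)) ≤ -|C₁| := by
      filter_upwards [hφtend.eventually (hVopen.mem_nhds hxV)] with n hn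
      exact hVbd _ ⟨hseqU (φ n), hn⟩
    have hSle : S ≤ -|C₁| := le_of_tendsto hHtend hev
    linarith [neg_abs_le C₁]
  by_cases hxU : x ∈ U
  · have hxD : x ∉ D := fun hxD => hxV (hVD ⟨hxD, hxcl⟩)
    have hxUD : x ∈ U \ D := ⟨hxU, hxD⟩
    have hmemn : U \ D ∈ 𝓝 x := hUDopen.mem_nhds hxUD
    have hCH : ContinuousAt H x := by
      have c1 := (hψhat2.contDiffAt hmemn).continuousAt
      have c2 := (hψ2.contDiffAt hmemn).continuousAt
      have c3 := (ht2.contDiffAt hmemn).continuousAt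
      exact (c1.sub c2).add ((continuousAt_const).mul c3)
    have hHx : H x = S := by
      have h1 : Filter.Tendsto (fun n => H (seq (φ n))) Filter.atTop (𝓝 (H x)) :=
        hCH.tendsto.comp hφtend
      exact tendsto_nhds_unique h1 hHtend
    have hmaxH : IsLocalMax H x := by
      filter_upwards [hmemn] with y hy
      rw [hHx]
      exact le_csSup hbdd ⟨y, hy, rfl⟩
    -- interior maximum principle step
    have hCD2 : ContDiffAt ℝ 2 H x :=
      ((hψhat2.contDiffAt hmemn).sub (hψ2.contDiffAt hmemn)).add
        ((contDiffAt_const).mul (ht2.contDiffAt hmemn))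
    have hsnd : ∀ u, fderiv ℝ (fderiv ℝ H) x u u ≤ 0 :=
      fun u => snd_deriv_nonpos_of_isLocalMax hCD2 hmaxH u
    have hcombo := snd_fderiv_combo hUDopen hxUD hψhat2 hψ2 ht2 δ
    have hpsd : (cHess N ψ x - cHess N ψhat x).PosSemidef := by
      rw [Matrix.posSemidef_iff_dotProduct_mulVec]
      constructor
      · exact (hψpsh x hxUD).isHermitian.sub (hψhatpsh x hxUD).isHermitian
      · intro v
        rw [Matrix.sub_mulVec, dotProduct_sub,
          cHess_dot N ψ x (hψpsh x hxUD).isHermitian v,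
          cHess_dot N ψhat x (hψhatpsh x hxUD).isHermitian v,
          ← Complex.ofReal_sub]
        rw [Complex.zero_le_real]
        have e1 := hcombo (cv N v)
        have e2 := hcombo (Complex.I • cv N v)
        have m1 := hsnd (cv N v)
        have m2 := hsnd (Complex.I • cv N v)
        have m3 : (0:ℝ) ≤ (fderiv ℝ (fderiv ℝ t) x (cv N v) (cv N v)
            + fderiv ℝ (fderiv ℝ t) x (Complex.I • cv N v) (Complex.I • cv N v)) / 4 := by
          have h0 := (htpsh x hxUD).dotProduct_mulVec_nonneg v
          rw [cHess_dot N t x (htpsh x hxUD).isHermitian v] at h0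
          exact Complex.zero_le_real.mp h0
        have hA : (0:ℝ) ≤ fderiv ℝ (fderiv ℝ t) x (cv N v) (cv N v)
            + fderiv ℝ (fderiv ℝ t) x (Complex.I • cv N v) (Complex.I • cv N v) := by linarith
        have hδA := mul_nonneg hδpos.le hA
        linarith [e1, e2, m1, m2, hδA]
    have hdet := det_mono_psd (hψhatpsh x hxUD) hpsd
    rw [hMA1 x hxUD, hMA2 x hxUD, Complex.real_le_real] at hdet
    have hΩx := hΩ x hxUD
    have hexp : Real.exp (ψhat x + F x) ≤ Real.exp (ψ x) :=
      le_of_mul_le_mul_right hdet hΩx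
    have hle : ψhat x + F x ≤ ψ x := Real.exp_le_exp.mp hexp
    have hFx := hF x hxUD
    have htx : t x ≤ 0 := htneg x hxUD.1
    have hδt : δ * t x ≤ 0 := mul_nonpos_of_nonneg_of_nonpos hδpos.le htx
    have hkey : H x ≤ C₁ := by
      simp only [hHdef]
      linarith [neg_le_abs (F x)]
    rw [← hHx]; exact hkey
  · have hxfr : x ∈ frontier U := by
      rw [frontier, hU.interior_eq]
      exact ⟨hxcl, hxU⟩
    have hgt : Filter.Tendsto (fun n => ψhat (seq (φ n)) - ψ (seq (φ n))) Filter.atTop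
        (𝓝 (ψhat x - ψ x)) := by
      have h1 : Filter.Tendsto (fun n => seq (φ n)) Filter.atTop (𝓝[closure U] x) := by
        rw [tendsto_nhdsWithin_iff]
        exact ⟨hφtend, Filter.Eventually.of_forall (fun n => hseqcl (φ n))⟩
      exact ((hcont x hxcl).tendsto.comp h1 : _)
    have hSle : S ≤ ψhat x - ψ x := by
      refine le_of_tendsto_of_tendsto' hHtend hgt (fun n => ?_)
      have h2 : δ * t (seq (φ n)) ≤ 0 :=
        mul_nonpos_of_nonneg_of_nonpos hδpos.le (htneg _ (hseqU (φ n)).1)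
      simp only [hHdef]; linarith
    exact hSle.trans (hbd x hxfr)
end
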